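/- arXiv:1102.3253 — 6 statements merged into one kernel-verified Lean document; each statement's English description precedes it below -/
import Mathlib

section
/- A function f : X → Y between metric spaces is closed (i.e., maps closed sets to closed sets) if and only if for every convergent sequence y_i → y in Y with y_i ∈ f(X), y_i pairwise distinct, and every choice of points x_i ∈ f⁻¹(y_i), the sequence (x_i) has a cluster point in f⁻¹(y). -/
/-!
A closed map sends the closure of `{x i | f (x i) ≠ y}` onto a closed set containing all
`f (x i) ≠ y`, hence containing their limit `y`; a preimage `x₀` of `y` in that closure is an
accumulation point of the sequence, because finitely many terms form a closed set avoiding it.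
Conversely, a point of `closure (f '' A) \ f '' A` is the limit of an injective sequence in
`f '' A`, and a cluster point of lifts of this sequence to the closed set `A` lies in `A`.
-/

open Topology Filter Set

section

variable {X Y : Type*}

theorem mapClusterPt_atTop_of_mem_closure_range_diff [TopologicalSpace X] [T1Space X]
    {u : ℕ → X} {c : X} (hc : c ∈ closure (range u \ {c})) : MapClusterPt c atTop u := by
  refine mapClusterPt_atTop_iff_forall_mem_closure.2 fun N => ?_
  have hsplit : range u \ {c} ⊆ (u '' Iio N \ {c}) ∪ u '' Ici N := by
    rintro _ ⟨⟨i, rfl⟩, hi⟩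
    rcases lt_or_ge i N with h | h
    · exact Or.inl ⟨mem_image_of_mem u h, hi⟩
    · exact Or.inr (mem_image_of_mem u h)
  have hhead : c ∉ closure (u '' Iio N \ {c}) := by
    rw [((finite_Iio N).image u).sdiff.isClosed.closure_eq]
    exact fun h => h.2 rfl
  have hsplit' := closure_mono hsplit hc
  rw [closure_union] at hsplit'
  exact hsplit'.resolve_left hhead

theorem IsClosedMap.exists_mapClusterPt_of_tendsto [TopologicalSpace X] [T1Space X]
    [TopologicalSpace Y] {f : X → Y} (hf : IsClosedMap f) {y : Y} {yseq : ℕ → Y}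
    (hy : Tendsto yseq atTop (𝓝 y)) (hne : ∀ᶠ i in atTop, yseq i ≠ y) {x : ℕ → X}
    (hx : ∀ i, f (x i) = yseq i) : ∃ x₀, f x₀ = y ∧ MapClusterPt x₀ atTop x := by
  set A := x '' {i | yseq i ≠ y}
  have hyA : y ∈ f '' closure A := by
    refine hf.closure_image_subset A (mem_closure_of_tendsto hy ?_)
    filter_upwards [hne] with i hi
    exact ⟨x i, mem_image_of_mem x hi, hx i⟩
  obtain ⟨c, hcA, rfl⟩ := hyA
  refine ⟨c, rfl, mapClusterPt_atTop_of_mem_closure_range_diff (closure_mono ?_ hcA)⟩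
  rintro _ ⟨i, hi, rfl⟩
  exact ⟨mem_range_self i, fun h => hi (by rw [← hx i, h])⟩

theorem exists_injective_subseq_of_tendsto_of_ne [MetricSpace X] {u : ℕ → X} {y : X}
    (hu : Tendsto u atTop (𝓝 y)) (hne : ∀ n, u n ≠ y) :
    ∃ φ : ℕ → ℕ, StrictMono φ ∧ Function.Injective (u ∘ φ) := by
  have hdist : Tendsto (fun n => dist (u n) y) atTop (𝓝[>] 0) :=
    tendsto_nhdsWithin_iff.2
      ⟨tendsto_iff_dist_tendsto_zero.1 hu, .of_forall fun n => dist_pos.2 (hne n)⟩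
  obtain ⟨φ, hφ, hmono⟩ :=
    strictMono_subseq_of_tendsto_atTop (tendsto_inv_nhdsGT_zero.comp hdist)
  exact ⟨φ, hφ, fun a b h => hmono.injective (congrArg (fun z => (dist z y)⁻¹) h)⟩

end

theorem closed_iff_cluster_point_general {X Y : Type*} [MetricSpace X] [MetricSpace Y]
    (f : X → Y) :
    IsClosedMap f ↔
      ∀ (y : Y) (yseq : ℕ → Y), Tendsto yseq atTop (𝓝 y) → Function.Injective yseq →
        ∀ x : ℕ → X, (∀ i, f (x i) = yseq i) →
          ∃ x₀, f x₀ = y ∧ MapClusterPt x₀ atTop x := by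
  constructor
  · intro hf y yseq hy hinj x hx
    have hne : ∀ᶠ i in atTop, yseq i ≠ y :=
      Nat.cofinite_eq_atTop ▸ hinj.tendsto_cofinite.eventually (eventually_cofinite_ne y)
    exact hf.exists_mapClusterPt_of_tendsto hy hne hx
  · intro H A hA
    refine isClosed_of_closure_subset fun y hy => ?_
    by_contra hyA
    obtain ⟨u, huA, hu⟩ := mem_closure_iff_seq_limit.1 hy
    obtain ⟨φ, hφ, hinj⟩ :=
      exists_injective_subseq_of_tendsto_of_ne hu fun n h => hyA (h ▸ huA n)
    choose x hxA hx using fun n => huA (φ n)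
    obtain ⟨x₀, rfl, hx₀⟩ := H y (u ∘ φ) (hu.comp hφ.tendsto_atTop) hinj x hx
    exact hyA ⟨x₀, hA.mem_of_mapClusterPt hx₀ (.of_forall hxA), rfl⟩

/-- A function `f : X → Y` between metric spaces is closed (maps closed sets to closed
sets) iff for every convergent sequence `y i → y` in `Y` with pairwise distinct terms
(all in the image of `f`, which is automatic since `f` is surjective), every choice of
points `x i ∈ f⁻¹(y i)` has a cluster point belonging to `f⁻¹(y)`. -/
theorem closed_iff_cluster_point {X Y : Type*} [MetricSpace X] [MetricSpace Y]
    (f : X → Y) (hf : Function.Surjective f) :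
    IsClosedMap f ↔
      ∀ (y : Y) (yseq : ℕ → Y), Tendsto yseq atTop (𝓝 y) → Function.Injective yseq →
        ∀ x : ℕ → X, (∀ i, f (x i) = yseq i) →
          ∃ x₀, f x₀ = y ∧ MapClusterPt x₀ atTop x :=
  closed_iff_cluster_point_general f
end

section
/- A surjective function f : X → Y between metric spaces is open (maps open sets to open sets) if and only if for every sequence y_i → y in Y with pairwise distinct terms, every point x ∈ f⁻¹(y), and every open ball O(x) centered at x, there are only finitely many indices i with f⁻¹(y_i) ∩ O(x) = ∅. -/
open Topology Filter Set

/-!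
An open map sends `ball x ε` onto a neighbourhood of `f x`, which every sequence tending to
`f x` eventually enters. Conversely, if `f '' ball x ε` is not a neighbourhood of `f x`, then
`f x` is a limit of points outside it; in a first-countable T1 space such a sequence takes each
value only finitely often, so it has an injective subsequence, and that subsequence misses
`f '' ball x ε` at every index.
-/

theorem Set.preimage_singleton_inter_eq_empty_iff {α β : Type*} {f : α → β} {s : Set α}
    {y : β} : f ⁻¹' {y} ∩ s = ∅ ↔ y ∉ f '' s := by
  simp [eq_empty_iff_forall_notMem, and_comm]

theorem Filter.Tendsto.exists_injective_comp_of_cofinite {α : Type*} {u : ℕ → α}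
    (hu : Tendsto u atTop cofinite) :
    ∃ φ : ℕ → ℕ, Tendsto φ atTop atTop ∧ Function.Injective (u ∘ φ) := by
  have hinf : (range u).Infinite := fun hfin => by
    simpa using hu hfin.compl_mem_cofinite
  -- `φ n` is some index at which `u` takes the `n`-th value of an enumeration of its range.
  let e := hinf.natEmbedding
  choose φ hφ using fun n => (e n).2
  have hinj : Function.Injective (u ∘ φ) := by
    simpa only [Function.comp_def, hφ] using Subtype.coe_injective.comp e.injective
  exact ⟨φ, hinj.of_comp.nat_tendsto_atTop, hinj⟩

theorem exists_injective_seq_tendsto_of_mem_closure {α : Type*} [TopologicalSpace α]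
    [T1Space α] [FrechetUrysohnSpace α] {t : Set α} {y : α} (hy : y ∈ closure t)
    (hyt : y ∉ t) :
    ∃ u : ℕ → α, Function.Injective u ∧ (∀ n, u n ∈ t) ∧ Tendsto u atTop (𝓝 y) := by
  obtain ⟨v, hvt, hv⟩ := mem_closure_iff_seq_limit.1 hy
  have hv_ne : Tendsto v atTop (𝓝[≠] y) :=
    tendsto_nhdsWithin_iff.2 ⟨hv, .of_forall fun n => ne_of_mem_of_not_mem (hvt n) hyt⟩
  obtain ⟨φ, hφ, hinj⟩ :=
    (hv_ne.mono_right (nhdsNE_le_cofinite y)).exists_injective_comp_of_cofinite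
  exact ⟨v ∘ φ, hinj, fun n => hvt _, hv.comp hφ⟩

theorem mem_nhds_iff_forall_injective_tendsto {α : Type*} [TopologicalSpace α]
    [T1Space α] [FrechetUrysohnSpace α] {s : Set α} {y : α} (hy : y ∈ s) :
    s ∈ 𝓝 y ↔ ∀ u : ℕ → α, Function.Injective u → Tendsto u atTop (𝓝 y) →
      {i | u i ∉ s}.Finite := by
  refine ⟨fun hs u _ hu => ?_, fun h => ?_⟩
  · exact eventually_cofinite.1 (Nat.cofinite_eq_atTop ▸ hu.eventually_mem hs)
  · by_contra hs
    have hcl : y ∈ closure sᶜ := by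
      rwa [closure_compl, mem_compl_iff, mem_interior_iff_mem_nhds]
    obtain ⟨u, hinj, hus, hu⟩ := exists_injective_seq_tendsto_of_mem_closure hcl (not_not.2 hy)
    exact infinite_univ ((h u hinj hu).subset fun i _ => hus i)

theorem Metric.isOpenMap_iff_image_ball_mem_nhds {X Y : Type*} [PseudoMetricSpace X]
    [TopologicalSpace Y] {f : X → Y} :
    IsOpenMap f ↔ ∀ x, ∀ ε > 0, f '' ball x ε ∈ 𝓝 (f x) := by
  simp only [isOpenMap_iff_nhds_le, ((Metric.nhds_basis_ball).map f).ge_iff]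

theorem open_iff_finitely_many_missed_balls_general {X Y : Type*} [MetricSpace X] [MetricSpace Y]
    (f : X → Y) :
    IsOpenMap f ↔
      ∀ (y : Y) (yseq : ℕ → Y), Tendsto yseq atTop (𝓝 y) → Function.Injective yseq →
        ∀ x : X, f x = y → ∀ ε > (0 : ℝ),
          {i : ℕ | f ⁻¹' {yseq i} ∩ Metric.ball x ε = ∅}.Finite := by
  simp_rw [preimage_singleton_inter_eq_empty_iff, Metric.isOpenMap_iff_image_ball_mem_nhds]
  have key (x : X) (ε : ℝ) (hε : 0 < ε) := mem_nhds_iff_forall_injective_tendsto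
    (mem_image_of_mem f (Metric.mem_ball_self (x := x) hε))
  constructor
  · rintro h _ u hu hinj x rfl ε hε
    exact (key x ε hε).1 (h x ε hε) u hinj hu
  · exact fun h x ε hε => (key x ε hε).2 fun u hinj hu => h _ u hu hinj x rfl ε hε

/-- A surjective function `f : X → Y` between metric spaces is open (maps open sets to
open sets) iff for every sequence `y i → y` in `Y` with pairwise distinct terms, every
point `x ∈ f⁻¹(y)` and every open ball around `x`, there are only finitely many indices
`i` with `f⁻¹(y i) ∩ O(x) = ∅`. -/
theorem open_iff_finitely_many_missed_balls {X Y : Type*} [MetricSpace X] [MetricSpace Y]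
    (f : X → Y) (hf : Function.Surjective f) :
    IsOpenMap f ↔
      ∀ (y : Y) (yseq : ℕ → Y), Tendsto yseq atTop (𝓝 y) → Function.Injective yseq →
        ∀ x : X, f x = y → ∀ ε > (0 : ℝ),
          {i : ℕ | f ⁻¹' {yseq i} ∩ Metric.ball x ε = ∅}.Finite :=
  open_iff_finitely_many_missed_balls_general f
end

section
/- Let f : X → Y be a clopen-LC function from a subset X of the Cantor set onto a subset Y of the Cantor set, with f⁻¹(y) compact for every y ∈ Y. Then Y can be covered by countably many subsets Y_0, Y_1, Y_2, … such that for every n ≥ 1 the restriction f : f⁻¹(Y_n) → Y_n is an open function, and the restriction f : f⁻¹(Y_0) → Y_0 is a closed function. -/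
open Topology Set TopologicalSpace

/-!
Take a countable Boolean algebra `𝒲` of clopen sets forming a basis of `X` (traces of clopens of
the Cantor set). The pieces `Yₙ`, `n ≥ 1`, are the defects
`closure (f '' W) \ f '' W = (coborder (f '' W))ᶜ` for `W ∈ 𝒲`, and `Y₀` is the set of points in
no defect. On the defect of `f '' W`, local closedness of `f '' (V ∪ W)` for a basic `V ⊆ U` makes
`f '' V ⊆ f '' U` a relative neighbourhood, so the restriction is open. If `y ∈ Y₀` is not in
`f '' C` with `C` closed, compactness of `f⁻¹ {y}` gives `W ∈ 𝒲` with `f⁻¹ {y} ⊆ W ⊆ Cᶜ`; then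
`y ∉ f '' Wᶜ`, and as `y` lies in no defect, `y ∉ closure (f '' Wᶜ) ⊇ closure (f '' C)`, so the
restriction is closed.
-/

section RestrictPreimage

variable {X Y : Type*} [TopologicalSpace X] [TopologicalSpace Y] {f : X → Y} {t : Set Y}

lemma isOpenMap_restrictPreimage_of_forall
    (h : ∀ U, IsOpen U → ∀ x ∈ U, f x ∈ t → ∃ G, IsOpen G ∧ f x ∈ G ∧ G ∩ t ⊆ f '' U) :
    IsOpenMap (t.restrictPreimage f) := by
  intro U' hU'
  obtain ⟨U, hU, rfl⟩ := isOpen_induced_iff.mp hU'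
  rw [image_restrictPreimage, isOpen_iff_forall_mem_open]
  rintro ⟨-, hy⟩ ⟨x, hxU, rfl⟩
  obtain ⟨G, hG, hxG, hGt⟩ := h U hU x hxU hy
  exact ⟨Subtype.val ⁻¹' G, fun z hz => hGt ⟨hz, z.2⟩, hG.preimage continuous_subtype_val, hxG⟩

lemma isClosedMap_restrictPreimage_of_forall
    (h : ∀ C, IsClosed C → closure (f '' C) ∩ t ⊆ f '' C) :
    IsClosedMap (t.restrictPreimage f) := by
  intro C' hC'
  obtain ⟨C, hC, rfl⟩ := isClosed_induced_iff.mp hC'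
  have hclosure : Subtype.val ⁻¹' (f '' C) = (Subtype.val ⁻¹' closure (f '' C) : Set t) :=
    (preimage_mono subset_closure).antisymm fun y hy => h C hC ⟨hy, y.2⟩
  rw [image_restrictPreimage, hclosure]
  exact isClosed_closure.preimage continuous_subtype_val

end RestrictPreimage

lemma coborder_union_inter_compl_coborder_subset {Y : Type*} [TopologicalSpace Y] (s t : Set Y) :
    coborder (t ∪ s) ∩ (coborder s)ᶜ ⊆ t := by
  rintro y ⟨hy, hys⟩
  obtain ⟨hys, hys'⟩ : y ∈ closure s \ s := notMem_compl_iff.mp hys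
  have hyst : y ∈ t ∪ s := by
    rw [← coborder_inter_closure (s := t ∪ s)]
    exact ⟨hy, closure_mono subset_union_right hys⟩
  exact hyst.resolve_right hys'

lemma TopologicalSpace.IsTopologicalBasis.exists_mem_of_isCompact_subset {X : Type*}
    [TopologicalSpace X] {𝒲 : Set (Set X)} (hbasis : IsTopologicalBasis 𝒲) (hsup : SupClosed 𝒲)
    (hbot : ∅ ∈ 𝒲) {K U : Set X} (hK : IsCompact K) (hU : IsOpen U) (hKU : K ⊆ U) :
    ∃ W ∈ 𝒲, K ⊆ W ∧ W ⊆ U := by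
  choose! B hB hxB hBU using fun x (hx : x ∈ K) => hbasis.exists_subset_of_mem_open (hKU hx) hU
  obtain ⟨s, hsK, hKs⟩ :=
    hK.elim_nhds_subcover B fun x hx => (hbasis.isOpen (hB x hx)).mem_nhds (hxB x hx)
  exact ⟨⋃ x ∈ s, B x, hsup.biSup_mem s.finite_toSet hbot fun x hx => hB x (hsK x hx), hKs,
    iUnion₂_subset fun x hx => hBU x (hsK x hx)⟩

def clopenSubalgebra (Z : Type*) [TopologicalSpace Z] : BooleanSubalgebra (Set Z) where
  carrier := {s | IsClopen s}
  supClosed' _ hs _ ht := hs.union ht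
  infClosed' _ hs _ ht := hs.inter ht
  compl_mem' := IsClopen.compl
  bot_mem' := isClopen_empty

lemma exists_countable_booleanSubalgebra_isTopologicalBasis {Z : Type*} [TopologicalSpace Z]
    [CompactSpace Z] [T2Space Z] [TotallyDisconnectedSpace Z] [SecondCountableTopology Z]
    (X : Set Z) :
    ∃ 𝒲 : BooleanSubalgebra (Set X),
      (𝒲 : Set (Set X)).Countable ∧ IsTopologicalBasis (𝒲 : Set (Set X)) := by
  have : Countable (Clopens Z) := Clopens.countable_iff_secondCountable.mpr inferInstance
  refine ⟨(clopenSubalgebra Z).map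
    (CompleteLatticeHom.setPreimage ((↑) : X → Z)).toBoundedLatticeHom, ?_, ?_⟩
  · rw [BooleanSubalgebra.coe_map]
    refine (Countable.mono ?_ (countable_range ((↑) : Clopens Z → Set Z))).image _
    exact fun s hs => ⟨⟨s, hs⟩, rfl⟩
  · exact isTopologicalBasis_isClopen.isInducing IsInducing.subtypeVal

section Decomposition

variable {X Y : Type*} [TopologicalSpace X] [TopologicalSpace Y] (f : X → Y)

lemma isOpenMap_restrictPreimage_compl_coborder_image {𝒲 : Set (Set X)}
    (hbasis : IsTopologicalBasis 𝒲) (hsup : SupClosed 𝒲)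
    (hLC : ∀ W ∈ 𝒲, IsLocallyClosed (f '' W)) {W : Set X} (hW : W ∈ 𝒲) :
    IsOpenMap ((coborder (f '' W))ᶜ.restrictPreimage f) := by
  refine isOpenMap_restrictPreimage_of_forall fun U hU x hxU _ => ?_
  obtain ⟨V, hV, hxV, hVU⟩ := hbasis.exists_subset_of_mem_open hxU hU
  refine ⟨coborder (f '' (V ∪ W)), isLocallyClosed_iff_isOpen_coborder.mp (hLC _ (hsup hV hW)),
    subset_coborder ⟨x, Or.inl hxV, rfl⟩, ?_⟩
  rw [image_union]
  exact (coborder_union_inter_compl_coborder_subset _ _).trans (image_mono hVU)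

variable (𝒲 : BooleanSubalgebra (Set X))

lemma closure_image_inter_iInter_coborder_subset (hbasis : IsTopologicalBasis (𝒲 : Set (Set X)))
    (hcomp : ∀ y, IsCompact (f ⁻¹' {y})) {C : Set X} (hC : IsClosed C) :
    closure (f '' C) ∩ ⋂ W ∈ 𝒲, coborder (f '' W) ⊆ f '' C := by
  rintro y ⟨hyC, hyW⟩
  by_contra hy
  obtain ⟨W, hW, hfibre, hWC⟩ := hbasis.exists_mem_of_isCompact_subset 𝒲.supClosed 𝒲.bot_mem
    (hcomp y) hC.isOpen_compl fun x hx hxC => hy ⟨x, hxC, hx⟩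
  have hyWc : y ∈ f '' Wᶜ := by
    rw [← coborder_inter_closure (s := f '' Wᶜ)]
    exact ⟨mem_iInter₂.mp hyW _ (𝒲.compl_mem hW),
      closure_mono (image_mono (subset_compl_comm.mp hWC)) hyC⟩
  obtain ⟨x, hxW, hxy⟩ := hyWc
  exact hxW (hfibre hxy)

theorem exists_iUnion_eq_univ_isOpenMap_isClosedMap_restrictPreimage
    (hcount : (𝒲 : Set (Set X)).Countable) (hbasis : IsTopologicalBasis (𝒲 : Set (Set X)))
    (hLC : ∀ W ∈ 𝒲, IsLocallyClosed (f '' W)) (hcomp : ∀ y, IsCompact (f ⁻¹' {y})) :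
    ∃ Yn : ℕ → Set Y, ⋃ n, Yn n = univ ∧
      (∀ n, 1 ≤ n → IsOpenMap ((Yn n).restrictPreimage f)) ∧
      IsClosedMap ((Yn 0).restrictPreimage f) := by
  obtain ⟨e, he⟩ := hcount.exists_eq_range ⟨∅, 𝒲.bot_mem⟩
  have he_mem (n : ℕ) : e n ∈ 𝒲 := (he ▸ mem_range_self n :)
  refine ⟨fun | 0 => ⋂ W ∈ 𝒲, coborder (f '' W) | n + 1 => (coborder (f '' e n))ᶜ, ?_, ?_, ?_⟩
  · refine eq_univ_of_forall fun y => ?_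
    by_cases hy : y ∈ ⋂ W ∈ 𝒲, coborder (f '' W)
    · exact mem_iUnion_of_mem 0 hy
    · obtain ⟨W, hW, hyW⟩ : ∃ W ∈ 𝒲, y ∉ coborder (f '' W) := by simpa using hy
      obtain ⟨n, rfl⟩ : W ∈ range e := he ▸ hW
      exact mem_iUnion_of_mem (n + 1) hyW
  · rintro (_ | n) hn
    · omega
    · exact isOpenMap_restrictPreimage_compl_coborder_image f hbasis 𝒲.supClosed hLC (he_mem n)
  · exact isClosedMap_restrictPreimage_of_forall fun C hC =>
      closure_image_inter_iInter_coborder_subset f 𝒲 hbasis hcomp hC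

end Decomposition

theorem clopenLC_decomposition_general (X Y : Set (ℕ → Bool)) (f : X → Y)
    (hLC : ∀ U : Set X, IsClopen U → IsLocallyClosed (f '' U))
    (hcomp : ∀ y : Y, IsCompact (f ⁻¹' {y})) :
    ∃ Yn : ℕ → Set Y, (⋃ n, Yn n) = univ ∧
      (∀ n, 1 ≤ n → IsOpenMap (fun x : (f ⁻¹' Yn n : Set X) => (⟨f x.1, x.2⟩ : Yn n))) ∧
      IsClosedMap (fun x : (f ⁻¹' Yn 0 : Set X) => (⟨f x.1, x.2⟩ : Yn 0)) := by
  obtain ⟨𝒲, hcount, hbasis⟩ := exists_countable_booleanSubalgebra_isTopologicalBasis X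
  have hclopen (W : Set X) (hW : W ∈ 𝒲) : IsClopen W :=
    ⟨isOpen_compl_iff.mp (hbasis.isOpen (𝒲.compl_mem hW)), hbasis.isOpen hW⟩
  exact exists_iUnion_eq_univ_isOpenMap_isClosedMap_restrictPreimage f 𝒲 hcount hbasis
    (fun W hW => hLC W (hclopen W hW)) hcomp

/-- **Theorem 1.** Let `f : X → Y` be a clopen-LC function between subsets of the
Cantor set `ℕ → Bool`, with compact preimages of points. Then `Y` can be covered by
countably many subsets `Y₀, Y₁, Y₂, …` such that the restriction of `f` to `f⁻¹(Yₙ)`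
is an open function onto `Yₙ` for every `n ≥ 1`, and the restriction of `f` to
`f⁻¹(Y₀)` is a closed function onto `Y₀`. -/
theorem clopenLC_decomposition (X Y : Set (ℕ → Bool)) (f : X → Y)
    (hsurj : Function.Surjective f)
    (hLC : ∀ U : Set X, IsClopen U → IsLocallyClosed (f '' U))
    (hcomp : ∀ y : Y, IsCompact (f ⁻¹' {y})) :
    ∃ Yn : ℕ → Set Y, (⋃ n, Yn n) = univ ∧
      (∀ n, 1 ≤ n → IsOpenMap (fun x : (f ⁻¹' Yn n : Set X) => (⟨f x.1, x.2⟩ : Yn n))) ∧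
      IsClosedMap (fun x : (f ⁻¹' Yn 0 : Set X) => (⟨f x.1, x.2⟩ : Yn 0)) :=
  clopenLC_decomposition_general X Y f hLC hcomp
end

section
/- Let X be a subset of the Cantor set, f : X → Y ⊆ Cantor set a clopen-LC function with compact point-preimages. For n ≥ 1, define X_n as the union of all fibers f⁻¹(y) such that there exists a sequence y_k → y in Y, y_k ≠ y, and points x_k ∈ f⁻¹(y_k) converging to a point x̃ in the Cantor set with dist(x̃, f⁻¹(y)) > 1/n. Then the restriction of f to X_n is an open function onto f(X_n). -/
/-!
Suppose `f` restricted to `Xₙ` were not open at `a`, witnessed by a neighbourhood `s` of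
`f a`. Choose a clopen `W ∋ a` whose points of `Xₙ` are mapped into `s`, and cut the
Cantor set into the finitely many cylinders `C` of a length `m` with `2⁻ᵐ < 1/n`. Every
fiber of `Xₙ` over a point `z ∉ s` misses `W`, and, by the definition of `Xₙ`, also misses
some cylinder `C` that contains points of fibers converging to `z`; so
`z ∈ closure (f (W ∪ C)) \ f (W ∪ C)`. These finitely many sets are closed, since `f` is
clopen-LC, so they also contain every limit of points `z ∉ s`, in particular `f a`, which
however lies in `f W`.
-/

open Topology Filter Set Metric

attribute [local instance] PiNat.metricSpace

theorem disjoint_closure_of_subset_iUnion_closure_sdiff {β ι : Type*} [TopologicalSpace β]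
    [Finite ι] {A : ι → Set β} (hA : ∀ i, IsLocallyClosed (A i)) {B Z : Set β}
    (hB : ∀ i, B ⊆ A i) (hZ : Z ⊆ ⋃ i, closure (A i) \ A i) : Disjoint (closure Z) B := by
  have hclosed : IsClosed (⋃ i, closure (A i) \ A i) :=
    isClosed_iUnion_of_finite fun i => isOpen_compl_iff.1 (hA i).isOpen_coborder
  exact (disjoint_iUnion_left.2 fun i => disjoint_sdiff_left.mono_right (hB i)).mono_left
    (closure_minimal hZ hclosed)

theorem exists_isClopen_mem_subset_of_mem_nhds {α : Type*} [TopologicalSpace α] [T2Space α]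
    [CompactSpace α] [TotallyDisconnectedSpace α] {X : Set α} {x : X} {u : Set X}
    (hu : u ∈ 𝓝 x) : ∃ W : Set X, IsClopen W ∧ x ∈ W ∧ W ⊆ u := by
  rw [nhds_subtype] at hu
  obtain ⟨V, ⟨hxV, hV⟩, hVu⟩ := ((nhds_basis_clopen (x : α)).comap Subtype.val).mem_iff.1 hu
  exact ⟨_, hV.preimage continuous_subtype_val, hxV, hVu⟩

def prefixCylinder {m : ℕ} (v : Fin m → Bool) : Set (ℕ → Bool) :=
  {x | ∀ i : Fin m, x i = v i}

theorem isClopen_prefixCylinder {m : ℕ} (v : Fin m → Bool) : IsClopen (prefixCylinder v) := by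
  rw [prefixCylinder, ofPred_forall]
  exact isClopen_iInter_of_finite fun i =>
    (isClopen_discrete {v i}).preimage (continuous_apply (i : ℕ))

theorem mem_prefixCylinder_self (m : ℕ) (x : ℕ → Bool) :
    x ∈ prefixCylinder fun i : Fin m => x i :=
  fun _ => rfl

theorem dist_le_of_mem_prefixCylinder {m : ℕ} {v : Fin m → Bool} {x y : ℕ → Bool}
    (hx : x ∈ prefixCylinder v) (hy : y ∈ prefixCylinder v) : dist x y ≤ (1 / 2) ^ m :=
  PiNat.mem_cylinder_iff_dist_le.1 fun i hi => (hx ⟨i, hi⟩).trans (hy ⟨i, hi⟩).symm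

theorem mem_closure_image_sdiff_image_of_tendsto {Y : Type*} [TopologicalSpace Y]
    {X : Set (ℕ → Bool)} {f : X → Y} {y : Y} {m : ℕ} {xseq : ℕ → X} {xt : ℕ → Bool}
    (hy : Tendsto (f ∘ xseq) atTop (𝓝 y))
    (hx : Tendsto (fun k => (xseq k : ℕ → Bool)) atTop (𝓝 xt))
    (hfar : (1 / 2) ^ m < infDist xt ((↑) '' (f ⁻¹' {y}))) :
    let C : Set X := (↑) ⁻¹' prefixCylinder fun i : Fin m => xt i
    y ∈ closure (f '' C) \ f '' C := by
  refine ⟨mem_closure_of_tendsto hy ?_, ?_⟩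
  · have hC := (isClopen_prefixCylinder _).isOpen.mem_nhds (mem_prefixCylinder_self m xt)
    filter_upwards [hx hC] with k hk using mem_image_of_mem f hk
  · rintro ⟨b, hb, rfl⟩
    have hbf : (b : ℕ → Bool) ∈ (↑) '' (f ⁻¹' {f b}) := mem_image_of_mem _ rfl
    have : infDist xt ((↑) '' (f ⁻¹' {f b})) ≤ (1 / 2) ^ m :=
      (infDist_le_dist_of_mem hbf).trans
        (dist_le_of_mem_prefixCylinder (mem_prefixCylinder_self m xt) hb)
    linarith

theorem isOpenMap_restrict_preimage_of_far_limits {Y : Type*} [TopologicalSpace Y]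
    {X : Set (ℕ → Bool)} {f : X → Y}
    (hLC : ∀ U : Set X, IsClopen U → IsLocallyClosed (f '' U)) {G : Set Y} {m : ℕ}
    (hG : ∀ y ∈ G, ∃ (xseq : ℕ → X) (xt : ℕ → Bool), Tendsto (f ∘ xseq) atTop (𝓝 y) ∧
      Tendsto (fun k => (xseq k : ℕ → Bool)) atTop (𝓝 xt) ∧
      (1 / 2) ^ m < infDist xt ((↑) '' (f ⁻¹' {y}))) :
    IsOpenMap (fun x : f ⁻¹' G => (⟨f x, mem_image_of_mem f x.2⟩ : f '' (f ⁻¹' G))) := by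
  set g := fun x : f ⁻¹' G => (⟨f x, mem_image_of_mem f x.2⟩ : f '' (f ⁻¹' G))
  rw [isOpenMap_iff_nhds_le]
  intro a s hs
  obtain ⟨u, hu, hus⟩ := (mem_nhds_subtype _ _ _).1 (mem_map.1 hs)
  obtain ⟨W, hW, haW, hWu⟩ := exists_isClopen_mem_subset_of_mem_nhds hu
  let C (v : Fin m → Bool) : Set X := (↑) ⁻¹' prefixCylinder v
  have hC (v : Fin m → Bool) : IsClopen (C v) :=
    (isClopen_prefixCylinder v).preimage continuous_subtype_val
  have hsc : ((↑) '' sᶜ : Set Y) ⊆ ⋃ v, closure (f '' (W ∪ C v)) \ f '' (W ∪ C v) := by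
    rintro _ ⟨z, hzs, rfl⟩
    have hzG : (z : Y) ∈ G := image_preimage_subset f G z.2
    have hzW : (z : Y) ∉ f '' W := by
      rintro ⟨b, hbW, hbz⟩
      have hgb : g ⟨b, mem_preimage.2 (hbz ▸ hzG)⟩ = z := Subtype.ext hbz
      exact hzs (hgb ▸ hus (hWu hbW))
    obtain ⟨xseq, xt, hy, hx, hfar⟩ := hG z hzG
    obtain ⟨hcl, hnot⟩ := mem_closure_image_sdiff_image_of_tendsto hy hx hfar
    refine mem_iUnion.2 ⟨fun i => xt i, closure_mono (image_mono subset_union_right) hcl, ?_⟩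
    rw [image_union]
    exact fun h => h.elim hzW hnot
  have hdisj := disjoint_closure_of_subset_iUnion_closure_sdiff
    (fun v => hLC _ (hW.union (hC v))) (fun v => image_mono subset_union_left) hsc
  by_contra hns
  have has : g a ∈ closure sᶜ := by rwa [closure_compl, mem_compl_iff, mem_interior_iff_mem_nhds]
  exact hdisj.notMem_of_mem_left (mem_closure_image continuous_subtype_val.continuousAt has)
    (mem_image_of_mem f haW)

theorem restriction_to_Xn_isOpenMap_general (X Y : Set (ℕ → Bool)) (f : X → Y)
    (hLC : ∀ U : Set X, IsClopen U → IsLocallyClosed (f '' U))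
    (n : ℕ) (hn : 1 ≤ n)
    (Xn : Set X)
    (hXn : Xn = ⋃ y ∈ {y : Y | ∃ (yseq : ℕ → Y) (xseq : ℕ → X) (xt : ℕ → Bool),
        Tendsto yseq atTop (𝓝 y) ∧ (∀ k, yseq k ≠ y) ∧ (∀ k, f (xseq k) = yseq k) ∧
        Tendsto (fun k => (xseq k : ℕ → Bool)) atTop (𝓝 xt) ∧
        Metric.infDist xt ((↑) '' (f ⁻¹' {y})) > 1 / (n : ℝ)},
      f ⁻¹' {y}) :
    IsOpenMap (fun x : Xn =>
      (⟨f x.1, Set.mem_image_of_mem f x.2⟩ : f '' Xn)) := by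
  obtain ⟨m, hm⟩ : ∃ m : ℕ, (1 / 2 : ℝ) ^ m < 1 / (n : ℝ) :=
    exists_pow_lt_of_lt_one (one_div_pos.2 (Nat.cast_pos.2 hn)) (by norm_num)
  rw [biUnion_preimage_singleton] at hXn
  subst hXn
  refine isOpenMap_restrict_preimage_of_far_limits (m := m) hLC fun y hy => ?_
  obtain ⟨yseq, xseq, xt, hyt, -, hfx, hxt, hdist⟩ := hy
  refine ⟨xseq, xt, ?_, hxt, hm.trans hdist⟩
  rwa [show f ∘ xseq = yseq from funext hfx]

/-- **Lemma 1.** Let `f : X → Y` be a clopen-LC function between subsets of the Cantor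
set with compact preimages of points, and for `n ≥ 1` let `Xₙ` be the union of the
fibers `f⁻¹(y)` for which there is a sequence `y k → y`, `y k ≠ y`, and points
`x k ∈ f⁻¹(y k)` converging (in the Cantor set) to a point `x̃` with
`dist(x̃, f⁻¹(y)) > 1/n`. Then the restriction of `f` to `Xₙ` is an open map onto
`f(Xₙ)`. -/
theorem restriction_to_Xn_isOpenMap (X Y : Set (ℕ → Bool)) (f : X → Y)
    (hLC : ∀ U : Set X, IsClopen U → IsLocallyClosed (f '' U))
    (hcomp : ∀ y : Y, IsCompact (f ⁻¹' {y}))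
    (n : ℕ) (hn : 1 ≤ n)
    (Xn : Set X)
    (hXn : Xn = ⋃ y ∈ {y : Y | ∃ (yseq : ℕ → Y) (xseq : ℕ → X) (xt : ℕ → Bool),
        Tendsto yseq atTop (𝓝 y) ∧ (∀ k, yseq k ≠ y) ∧ (∀ k, f (xseq k) = yseq k) ∧
        Tendsto (fun k => (xseq k : ℕ → Bool)) atTop (𝓝 xt) ∧
        Metric.infDist xt ((↑) '' (f ⁻¹' {y})) > 1 / (n : ℝ)},
      f ⁻¹' {y}) :
    IsOpenMap (fun x : Xn =>
      (⟨f x.1, Set.mem_image_of_mem f x.2⟩ : f '' Xn)) :=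
  restriction_to_Xn_isOpenMap_general X Y f hLC n hn Xn hXn
end

section
/- Let f : X → Y be a continuous, surjective, open-LC function between separable metric spaces with compact point-preimages. Then Y can be covered by countably many subsets Y_0, Y_1, Y_2, … such that the restriction of f to f⁻¹(Y_n) is an open function onto Y_n for each n ≥ 1, and the restriction of f to f⁻¹(Y_0) is a closed function onto Y_0. -/
/-!
Fix open sets `Wₙ` (complements of closures of finite unions of basic open sets) such that every
closed set `C` and compact set `K` disjoint from it are separated by some `Wₙ ⊇ C` missing `K`,
and put `Dₙ = cl f(Wₙ) \ f(Wₙ)`. Over `Dₙ` the map `f` is open: for open `O`, the sets `f(O)` and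
`f(O ∪ Wₙ)` agree on `Dₙ`, and the locally closed set `f(O ∪ Wₙ)` is open in its closure, which
contains `Dₙ`. Off `⋃ Dₙ` the map `f` is closed: if `y ∉ f(C)` with `C` closed, some `Wₙ ⊇ C` misses
the compact fibre `f⁻¹(y)`, so `y ∉ f(Wₙ)`, and `y ∉ Dₙ` forces `y ∉ cl f(Wₙ) ⊇ f(C)`.
-/

open Topology Set TopologicalSpace
open scoped Set.Notation

section

variable {X Y : Type*} [TopologicalSpace X] [TopologicalSpace Y]

theorem TopologicalSpace.IsTopologicalBasis.exists_finite_sUnion_between {b : Set (Set X)}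
    (hb : IsTopologicalBasis b) {K V : Set X} (hK : IsCompact K) (hV : IsOpen V) (hKV : K ⊆ V) :
    ∃ t ⊆ b, t.Finite ∧ K ⊆ ⋃₀ t ∧ ⋃₀ t ⊆ V := by
  obtain ⟨t, htb, htf, hKt⟩ := hK.elim_finite_subcover_image (b := {B ∈ b | B ⊆ V}) (c := id)
    (fun B hB => hb.isOpen hB.1) (by simpa only [id, ← sUnion_eq_biUnion, ← hb.open_eq_sUnion' hV])
  exact ⟨t, fun B hB => (htb hB).1, htf, by simpa only [id, sUnion_eq_biUnion],
    sUnion_subset fun B hB => (htb hB).2⟩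

theorem exists_seq_isOpen_separating_isCompact_isClosed [RegularSpace X]
    [SecondCountableTopology X] :
    ∃ W : ℕ → Set X, (∀ n, IsOpen (W n)) ∧ ∀ K C : Set X, IsCompact K → IsClosed C →
      Disjoint K C → ∃ n, C ⊆ W n ∧ Disjoint K (W n) := by
  obtain ⟨b, hbc, -, hb⟩ := exists_countable_basis X
  obtain ⟨W, hW⟩ := ((countable_ofPred_finite_subset hbc).image
    fun t => (closure (⋃₀ t))ᶜ).exists_eq_range ⟨_, ∅, ⟨finite_empty, empty_subset _⟩, rfl⟩
  refine ⟨W, fun n => ?_, fun K C hK hC hKC => ?_⟩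
  · obtain ⟨t, -, ht⟩ : W n ∈ _ := hW ▸ mem_range_self n
    exact ht ▸ isClosed_closure.isOpen_compl
  · obtain ⟨V, hVo, hKV, hVC⟩ :=
      hK.exists_isOpen_closure_subset (hC.isOpen_compl.mem_nhdsSet.2 hKC.subset_compl_right)
    obtain ⟨t, htb, htf, hKt, htV⟩ := hb.exists_finite_sUnion_between hK hVo hKV
    obtain ⟨n, hn⟩ : (closure (⋃₀ t))ᶜ ∈ range W := hW ▸ mem_image_of_mem _ ⟨htf, htb⟩
    exact ⟨n, hn ▸ ⟨subset_compl_comm.1 ((closure_mono htV).trans hVC),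
      disjoint_compl_right.mono_left (hKt.trans subset_closure)⟩⟩

theorem IsLocallyClosed.isOpen_preimage_val_of_subset_closure {s t : Set X}
    (hs : IsLocallyClosed s) (ht : t ⊆ closure s) : IsOpen (t ↓∩ s) :=
  hs.isOpen_preimage_val_closure.preimage (continuous_inclusion ht)

theorem isOpenMap_restrictPreimage_of_isOpen_image {f : X → Y} {t : Set Y}
    (h : ∀ U, IsOpen U → IsOpen (t ↓∩ f '' U)) : IsOpenMap (t.restrictPreimage f) := by
  intro s hs
  obtain ⟨U, hU, rfl⟩ := isOpen_induced_iff.mp hs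
  rw [image_restrictPreimage]
  exact h U hU

theorem isClosedMap_restrictPreimage_of_inter_closure_image_subset {f : X → Y} {t : Set Y}
    (h : ∀ C, IsClosed C → t ∩ closure (f '' C) ⊆ f '' C) :
    IsClosedMap (t.restrictPreimage f) := by
  intro s hs
  obtain ⟨C, hC, rfl⟩ := isClosed_induced_iff.mp hs
  rw [image_restrictPreimage, isClosed_preimage_val]
  exact (inter_subset_inter_right _ (closure_mono inter_subset_right)).trans (h C hC)

theorem isOpenMap_restrictPreimage_closure_image_diff_image {f : X → Y}
    (hf : ∀ U, IsOpen U → IsLocallyClosed (f '' U)) {W : Set X} (hW : IsOpen W) :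
    IsOpenMap ((closure (f '' W) \ f '' W).restrictPreimage f) := by
  refine isOpenMap_restrictPreimage_of_isOpen_image fun O hO => ?_
  have hOW : (closure (f '' W) \ f '' W) ↓∩ f '' O =
      (closure (f '' W) \ f '' W) ↓∩ f '' (O ∪ W) := by
    ext ⟨y, -, hyW⟩
    simp [image_union, hyW]
  rw [hOW]
  exact (hf _ (hO.union hW)).isOpen_preimage_val_of_subset_closure
    (sdiff_subset.trans (closure_mono (image_mono subset_union_right)))

theorem mem_closure_image_diff_image_of_disjoint_fiber {α : Type*} {f : α → Y}
    {C W : Set α} {y : Y} (hCW : C ⊆ W) (hW : Disjoint (f ⁻¹' {y}) W)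
    (hy : y ∈ closure (f '' C)) :
    y ∈ closure (f '' W) \ f '' W :=
  ⟨closure_mono (image_mono hCW) hy, fun ⟨_, hxW, hxy⟩ => disjoint_left.1 hW hxy hxW⟩

end

theorem openLC_decomposition_general {X Y : Type*} [MetricSpace X] [SeparableSpace X]
    [MetricSpace Y] (f : X → Y)
    (hLC : ∀ U : Set X, IsOpen U → IsLocallyClosed (f '' U))
    (hcomp : ∀ y : Y, IsCompact (f ⁻¹' {y})) :
    ∃ Yn : ℕ → Set Y, (⋃ n, Yn n) = univ ∧
      (∀ n, 1 ≤ n → IsOpenMap (fun x : (f ⁻¹' Yn n : Set X) => (⟨f x.1, x.2⟩ : Yn n))) ∧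
      IsClosedMap (fun x : (f ⁻¹' Yn 0 : Set X) => (⟨f x.1, x.2⟩ : Yn 0)) := by
  have : SecondCountableTopology X := UniformSpace.secondCountable_of_separable X
  obtain ⟨W, hWo, hWsep⟩ := exists_seq_isOpen_separating_isCompact_isClosed (X := X)
  set D : ℕ → Set Y := fun n => closure (f '' W n) \ f '' W n
  refine ⟨fun n => Nat.casesOn n (⋃ i, D i)ᶜ D, eq_univ_of_forall fun y => ?_, ?_, ?_⟩
  · by_cases hy : y ∈ ⋃ i, D i
    · obtain ⟨i, hi⟩ := mem_iUnion.1 hy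
      exact mem_iUnion.2 ⟨i + 1, hi⟩
    · exact mem_iUnion.2 ⟨0, hy⟩
  · rintro (_ | n) hn
    · omega
    · exact isOpenMap_restrictPreimage_closure_image_diff_image hLC (hWo n)
  · refine isClosedMap_restrictPreimage_of_inter_closure_image_subset
      fun C hC y ⟨hyD, hyC⟩ => by_contra fun hyf => ?_
    obtain ⟨n, hCW, hyW⟩ := hWsep _ C (hcomp y) hC
      (disjoint_left.2 fun x hxy hxC => hyf ⟨x, hxC, hxy⟩)
    exact hyD (mem_iUnion.2 ⟨n, mem_closure_image_diff_image_of_disjoint_fiber hCW hyW hyC⟩)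

/-- **Corollary 1.** Let `f : X → Y` be a continuous surjective open-LC function
between separable metric spaces with compact preimages of points. Then `Y` can be
covered by countably many subsets `Y₀, Y₁, …` such that the restriction of `f` to
`f⁻¹(Yₙ)` is open onto `Yₙ` for each `n ≥ 1` and the restriction of `f` to `f⁻¹(Y₀)`
is closed onto `Y₀`. -/
theorem openLC_decomposition {X Y : Type*} [MetricSpace X] [SeparableSpace X]
    [MetricSpace Y] [SeparableSpace Y] (f : X → Y)
    (hcont : Continuous f) (hsurj : Function.Surjective f)
    (hLC : ∀ U : Set X, IsOpen U → IsLocallyClosed (f '' U))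
    (hcomp : ∀ y : Y, IsCompact (f ⁻¹' {y})) :
    ∃ Yn : ℕ → Set Y, (⋃ n, Yn n) = univ ∧
      (∀ n, 1 ≤ n → IsOpenMap (fun x : (f ⁻¹' Yn n : Set X) => (⟨f x.1, x.2⟩ : Yn n))) ∧
      IsClosedMap (fun x : (f ⁻¹' Yn 0 : Set X) => (⟨f x.1, x.2⟩ : Yn 0)) :=
  openLC_decomposition_general f hLC hcomp
end

section
/- Let f : X → Y be a bijection between separable metric spaces such that both f and f⁻¹ are open-LC functions. Then f is a countable homeomorphism: X can be partitioned into countably many pairwise disjoint sets X_i such that each restriction f|X_i : X_i → f(X_i) is a homeomorphism (with subspace topologies). -/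
open Topology Set TopologicalSpace Filter

/-!
All but countably many points of a second countable space are condensation points, so
`A = {x | x and f x are condensation points}` has countable complement, which can be cut into
singletons. It remains to see that `f` and `f⁻¹` are continuous on `A` and `f '' A`.

If `K` is countable, `c ∉ K` and `f '' Kᶜ` is locally closed, then `f c` is not in the closure
of `f '' s` for any `s ⊆ K` whose image consists of condensation points: that image lies in
`closure (f '' Kᶜ) \ f '' Kᶜ`, which is closed. Now if `f` is discontinuous within `A` at `x₀`,
pick `zₙ ∈ A` with `zₙ → x₀` and `f x₀ ∉ closure {f zₙ}`. If `{f zₙ}` is closed, apply the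
observation to `f⁻¹` with `K = {f zₙ}` and `c = f x₀`; otherwise apply it to `f` with
`K = {x₀} ∪ {zₙ}` and `c = f⁻¹ y` for some `y ∈ closure {f zₙ} \ {f zₙ}`.
-/

section CondensationPt

variable {X : Type*} [TopologicalSpace X] {x : X} {s C : Set X}

def CondensationPt (x : X) (s : Set X) : Prop :=
  ∀ U ∈ 𝓝 x, ¬(U ∩ s).Countable

theorem CondensationPt.mem_closure_diff (h : CondensationPt x s) (hC : C.Countable) :
    x ∈ closure (s \ C) := by
  refine mem_closure_iff_nhds.2 fun U hU => ?_
  by_contra hempty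
  refine h U hU (hC.mono fun y ⟨hyU, hys⟩ => ?_)
  by_contra hyC
  exact hempty ⟨y, hyU, hys, hyC⟩

theorem countable_setOf_not_condensationPt [SecondCountableTopology X] (s : Set X) :
    {x ∈ s | ¬CondensationPt x s}.Countable := by
  have hU : ∀ x ∈ {x ∈ s | ¬CondensationPt x s}, ∃ U ∈ 𝓝 x, (U ∩ s).Countable :=
    fun x hx => by simpa [CondensationPt] using hx.2
  choose! U hUx hUcount using hU
  obtain ⟨t, hts, htc, hcover⟩ :=
    countable_cover_nhdsWithin fun x hx => mem_nhdsWithin_of_mem_nhds (hUx x hx)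
  refine (htc.biUnion fun x hx => hUcount x (hts hx)).mono fun y hy => ?_
  obtain ⟨x, hxt, hyx⟩ := mem_iUnion₂.1 (hcover hy)
  exact mem_biUnion hxt ⟨hyx, hy.1⟩

end CondensationPt

section Topology

variable {X Y : Type*} [TopologicalSpace X] [TopologicalSpace Y]

theorem IsLocallyClosed.notMem_closure_of_subset {s : Set X} (hs : IsLocallyClosed s)
    {x : X} (hx : x ∈ s) {t : Set X} (ht : t ⊆ closure s \ s) : x ∉ closure t :=
  fun hxt => (closure_minimal ht (isOpen_compl_iff.1 hs.isOpen_coborder) hxt).2 hx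

theorem Equiv.image_notMem_closure_image_of_isLocallyClosed {P : Type*} (e : P ≃ Y)
    {K : Set P} (hK : K.Countable) (hLC : IsLocallyClosed (e '' Kᶜ)) {c : P} (hc : c ∉ K)
    {s : Set P} (hsK : s ⊆ K) (hs : ∀ a ∈ s, CondensationPt (e a) univ) :
    e c ∉ closure (e '' s) := by
  refine hLC.notMem_closure_of_subset (mem_image_of_mem e hc) ?_
  rintro _ ⟨a, ha, rfl⟩
  refine ⟨?_, fun h => e.injective.mem_set_image.1 h (hsK ha)⟩
  rw [e.image_compl, compl_eq_univ_sdiff]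
  exact (hs a ha).mem_closure_diff (hK.image e)

theorem exists_seq_of_not_continuousWithinAt [FrechetUrysohnSpace X] {f : X → Y} {A : Set X}
    {x₀ : X} (h : ¬ContinuousWithinAt f A x₀) :
    ∃ z : ℕ → X, (∀ n, z n ∈ A) ∧ Tendsto z atTop (𝓝 x₀) ∧ f x₀ ∉ closure (range (f ∘ z)) := by
  obtain ⟨W, hW, hfreq⟩ := not_tendsto_iff_exists_frequently_notMem.1 h
  have hx₀ : x₀ ∈ closure (A ∩ f ⁻¹' Wᶜ) := mem_closure_iff_frequently.2
    ((frequently_nhdsWithin_iff.1 hfreq).mono fun x hx => ⟨hx.2, hx.1⟩)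
  obtain ⟨z, hz, hlim⟩ := mem_closure_iff_seq_limit.1 hx₀
  refine ⟨z, fun n => (hz n).1, hlim, fun hcl => ?_⟩
  have hsub : closure (range (f ∘ z)) ⊆ (interior W)ᶜ :=
    closure_compl (s := W) ▸ closure_mono (range_subset_iff.2 fun n => (hz n).2)
  exact hsub hcl (mem_interior_iff_mem_nhds.2 hW)

theorem Equiv.continuousWithinAt_of_isLocallyClosed_image [FrechetUrysohnSpace X] [T2Space X]
    (e : X ≃ Y) (hLC : ∀ U, IsOpen U → IsLocallyClosed (e '' U))
    (hLCsymm : ∀ V, IsOpen V → IsLocallyClosed (e.symm '' V)) {A : Set X}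
    (hA : ∀ x ∈ A, CondensationPt x univ ∧ CondensationPt (e x) univ) (x₀ : X) :
    ContinuousWithinAt e A x₀ := by
  by_contra hdisc
  obtain ⟨z, hzA, hz, hx₀⟩ := exists_seq_of_not_continuousWithinAt hdisc
  by_cases hclosed : IsClosed (range (e ∘ z))
  · have hx₀K : e x₀ ∉ range (e ∘ z) := fun h => hx₀ (subset_closure h)
    refine e.symm.image_notMem_closure_image_of_isLocallyClosed (countable_range _)
      (hLCsymm _ hclosed.isOpen_compl) hx₀K subset_rfl ?_ ?_
    · rintro _ ⟨n, rfl⟩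
      simpa using (hA _ (hzA n)).1
    · rw [e.symm_apply_apply, range_comp, e.symm_image_image]
      exact mem_closure_of_tendsto hz (Eventually.of_forall mem_range_self)
  · obtain ⟨y, hycl, hyz⟩ := not_subset.1 (mt isClosed_of_closure_subset hclosed)
    have hyK : e.symm y ∉ insert x₀ (range z) := by
      rintro (h | ⟨n, hn⟩)
      · exact hx₀ (by rwa [← h, e.apply_symm_apply])
      · exact hyz ⟨n, by simp [hn]⟩
    refine e.image_notMem_closure_image_of_isLocallyClosed ((countable_range z).insert x₀)
      (hLC _ hz.isCompact_insert_range.isClosed.isOpen_compl) hyK (subset_insert _ _) ?_ ?_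
    · rintro _ ⟨n, rfl⟩
      exact (hA _ (hzA n)).2
    · rwa [e.apply_symm_apply, ← range_comp]

theorem Equiv.isHomeomorph_imageFactorization (e : X ≃ Y) {s : Set X}
    (he : ContinuousOn e s) (hsymm : ContinuousOn e.symm (e '' s)) :
    IsHomeomorph (s.imageFactorization e) := by
  have hmaps : MapsTo e.symm (e '' s) s := by
    rintro _ ⟨x, hx, rfl⟩
    simpa using hx
  refine isHomeomorph_iff_exists_inverse.2 ⟨he.mapsToRestrict (mapsTo_image e s),
    hmaps.restrict, fun x => Subtype.ext (e.symm_apply_apply x), fun y => Subtype.ext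
    (e.apply_symm_apply y), hsymm.mapsToRestrict hmaps⟩

end Topology

theorem exists_partition_eq_or_subsingleton {α : Type*} {s : Set α} (hs : sᶜ.Countable) :
    ∃ Xi : ℕ → Set α, (⋃ i, Xi i) = univ ∧ Pairwise (Function.onFun Disjoint Xi) ∧
      ∀ i, Xi i = s ∨ (Xi i).Subsingleton := by
  classical
  obtain ⟨g, hg⟩ := countable_iff_exists_injOn.1 hs
  set h : α → ℕ := fun x => if x ∈ s then 0 else g x + 1
  refine ⟨fun i => h ⁻¹' {i}, eq_univ_of_forall fun x => mem_iUnion.2 ⟨h x, rfl⟩,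
    pairwise_disjoint_fiber h, ?_⟩
  rintro (_ | i)
  · left
    ext x
    by_cases hx : x ∈ s <;> simp [h, hx]
  · right
    intro x hx y hy
    have hxs : x ∉ s := fun hxs => by simp [h, hxs] at hx
    have hys : y ∉ s := fun hys => by simp [h, hys] at hy
    simp only [h, hxs, hys, if_false, mem_preimage, mem_singleton_iff] at hx hy
    exact hg hxs hys (by omega)

/-- **Corollary 3.** Let `f : X → Y` be a bijection between separable metric spaces
such that both `f` and `f⁻¹` are open-LC (images of open sets are locally closed; the
image under `f⁻¹` of an open set is its preimage under `f`). Then `f` is a countable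
homeomorphism: `X` partitions into countably many pairwise disjoint sets `Xᵢ` such
that each restriction `f : Xᵢ → f(Xᵢ)` is a homeomorphism. -/
theorem countable_homeomorphism_of_openLC {X Y : Type*} [MetricSpace X] [SeparableSpace X]
    [MetricSpace Y] [SeparableSpace Y] (f : X → Y) (hbij : Function.Bijective f)
    (hLC : ∀ U : Set X, IsOpen U → IsLocallyClosed (f '' U))
    (hLCinv : ∀ V : Set Y, IsOpen V → IsLocallyClosed (f ⁻¹' V)) :
    ∃ Xi : ℕ → Set X, (⋃ i, Xi i) = univ ∧ Pairwise (Function.onFun Disjoint Xi) ∧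
      ∀ i, IsHomeomorph (fun x : Xi i =>
        (⟨f x.1, Set.mem_image_of_mem f x.2⟩ : f '' Xi i)) := by
  have := UniformSpace.secondCountable_of_separable X
  have := UniformSpace.secondCountable_of_separable Y
  set e := Equiv.ofBijective f hbij
  have hLCsymm : ∀ V, IsOpen V → IsLocallyClosed (e.symm '' V) := fun V hV => by
    rw [e.image_symm_eq_preimage]
    exact hLCinv V hV
  set A := {x | CondensationPt x univ ∧ CondensationPt (e x) univ}
  have hAc : Aᶜ.Countable := by
    refine ((countable_setOf_not_condensationPt univ).union
      ((countable_setOf_not_condensationPt univ).preimage e.injective)).mono fun x hx => ?_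
    simpa [A, imp_iff_not_or] using hx
  have he : ContinuousOn e A := fun x _ =>
    e.continuousWithinAt_of_isLocallyClosed_image hLC hLCsymm (fun x hx => hx) x
  have hsymm : ContinuousOn e.symm (e '' A) := fun y _ =>
    e.symm.continuousWithinAt_of_isLocallyClosed_image hLCsymm hLC
      (by rintro _ ⟨x, hx, rfl⟩; simpa using hx.symm) y
  obtain ⟨Xi, hcover, hdisj, hpieces⟩ := exists_partition_eq_or_subsingleton hAc
  refine ⟨Xi, hcover, hdisj, fun i => ?_⟩
  rcases hpieces i with hi | hi
  · rw [hi]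
    exact e.isHomeomorph_imageFactorization he hsymm
  · exact e.isHomeomorph_imageFactorization (hi.continuousOn e) ((hi.image e).continuousOn _)
end
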